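/- arXiv:2203.15717 — 6 statements merged into one kernel-verified Lean document; each statement's English description precedes it below -/
import Mathlib

section
/- Discrete Girsanov identity on the directed triangular lattice (Lemma 2.3 of the paper): Let δ > 0 and let c₁, c₂, c₃ : ℂ → ℝ be functions with 1 + c_k(v)·δ > 0 for every v ∈ ℂ and k ∈ {1,2,3}. For every path γ = (x₀, x₁, …, xₙ) of length n in the directed triangular lattice of mesh δ, one has ∏_{s=0}^{n−1} a_{k_s}(x_s)/a(x_s) = 3^{−n} · exp(Mₙ − ½·Vₙ), where k_s ∈ {1,2,3} is the unique index with x_{s+1} − x_s = δ·τ^{k_s−1}, Mₙ = (2/3)·Σ_{s=0}^{n−1} ⟨α(x_s), x_{s+1} − x_s⟩ and Vₙ = (2/3)·δ²·Σ_{s=0}^{n−1} β(x_s)². -/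
open Finset

/-- The primitive third root of unity `τ = e^{2πi/3}`. -/
noncomputable def triTau : ℂ := Complex.exp (2 * Real.pi * Complex.I / 3)

/-- The real inner product `⟨z, w⟩ = Re (z · conj w)` on `ℂ`. -/
noncomputable def cinner (z w : ℂ) : ℝ := (z * (starRingEnd ℂ) w).re

/-!
Since `⟨τʲ, τᵏ⟩ = 1` for `j = k` and `-1/2` otherwise, the drift term of one step in direction
`τᵏ` is `(2/3)⟨α, δτᵏ⟩ = log aₖ - (1/3) Σⱼ log aⱼ`, while taking logarithms in the definition of
`β` gives `(1/3) δ²β² = log (a/3) - (1/3) Σⱼ log aⱼ`. Their difference is `log aₖ - log (a/3)`, so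
every factor `aₖ/a` is `(1/3) exp` of the step's contribution to `Mₙ - ½Vₙ`, and the product over
the path collects these exponents into sums.
-/

open Real InnerProductSpace

lemma cinner_eq_inner (z w : ℂ) : cinner z w = ⟪w, z⟫_ℝ := (Complex.inner w z).symm

lemma triTau_eq : triTau = ⟨-1 / 2, √3 / 2⟩ := by
  have hangle : 2 * π / 3 = π - π / 3 := by ring
  have h : 2 * (π : ℂ) * Complex.I / 3 = ((2 * π / 3 : ℝ) : ℂ) * Complex.I := by push_cast; ring
  apply Complex.ext
  · rw [triTau, h, Complex.exp_ofReal_mul_I_re, hangle, cos_pi_sub, cos_pi_div_three]; norm_num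
  · rw [triTau, h, Complex.exp_ofReal_mul_I_im, hangle, sin_pi_sub, sin_pi_div_three]

lemma inner_triTau_pow_triTau_pow (j k : Fin 3) :
    ⟪triTau ^ (j : ℕ), triTau ^ (k : ℕ)⟫_ℝ = if j = k then 1 else -1 / 2 := by
  have h3 : √3 * √3 = 3 := Real.mul_self_sqrt (by norm_num)
  fin_cases j <;> fin_cases k <;>
    simp only [Complex.inner, triTau_eq] <;> simp [pow_two] <;> nlinarith [h3]

lemma inner_triTau_pow_sum (r : ℝ) (L : Fin 3 → ℝ) (k : Fin 3) :
    ⟪(r : ℂ) * triTau ^ (k : ℕ), ∑ j, (L j : ℂ) * triTau ^ (j : ℕ)⟫_ℝ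
      = r * (3 / 2 * L k - 1 / 2 * ∑ j, L j) := by
  simp only [← Complex.real_smul, inner_sum, real_inner_smul_left, real_inner_smul_right,
    inner_triTau_pow_triTau_pow]
  fin_cases k <;> simp [Fin.sum_univ_three] <;> ring

lemma log_zpow_neg_mul_prod {ι : Type*} (s : Finset ι) {p : ι → ℝ} (hp : ∀ i ∈ s, 0 < p i)
    {r : ℝ} (hr : 0 < r) (m : ℤ) :
    log (r ^ (-m) * ∏ i ∈ s, p i) = ∑ i ∈ s, log (p i) - m * log r := by
  rw [log_mul (zpow_pos hr _).ne' (prod_pos hp).ne', log_zpow, log_prod (fun i hi => (hp i hi).ne')]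
  push_cast; ring

lemma div_sum_eq_girsanov_weight {δ : ℝ} (hδ : δ ≠ 0) {p : Fin 3 → ℝ} (hp : ∀ j, 0 < p j)
    {b : ℝ} (hb : exp (-(δ ^ 2) * b ^ 2) = ((∑ j, p j) / 3) ^ (-(3 : ℤ)) * ∏ j, p j)
    (k : Fin 3) :
    p k / ∑ j, p j = 3⁻¹ * exp (2 / 3 * cinner (∑ j, ((δ⁻¹ * log (p j) : ℝ) : ℂ) *
        triTau ^ (j : ℕ)) (δ * triTau ^ (k : ℕ)) - 1 / 3 * δ ^ 2 * b ^ 2) := by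
  have hmean : 0 < (∑ j, p j) / 3 := by
    have := sum_pos (fun j _ => hp j) univ_nonempty
    positivity
  have hdrift : cinner (∑ j, ((δ⁻¹ * log (p j) : ℝ) : ℂ) * triTau ^ (j : ℕ))
      (δ * triTau ^ (k : ℕ)) = 3 / 2 * log (p k) - 1 / 2 * ∑ j, log (p j) := by
    rw [cinner_eq_inner, inner_triTau_pow_sum, ← mul_sum]
    field_simp
  have hvar : δ ^ 2 * b ^ 2 = 3 * log ((∑ j, p j) / 3) - ∑ j, log (p j) := by
    have := congrArg log hb
    rw [log_exp, log_zpow_neg_mul_prod _ (fun j _ => hp j) hmean] at this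
    push_cast at this
    linarith
  calc p k / ∑ j, p j = 3⁻¹ * exp (log (p k) - log ((∑ j, p j) / 3)) := by
        rw [exp_sub, exp_log (hp k), exp_log hmean]
        field_simp
    _ = _ := by
        rw [hdrift, mul_assoc _ (δ ^ 2), hvar]
        ring_nf

theorem discrete_girsanov_triangular_general
    (δ : ℝ) (hδ : 0 < δ)
    (c : Fin 3 → ℂ → ℝ)
    (hc : ∀ k v, 0 < 1 + c k v * δ)
    (n : ℕ) (x : ℕ → ℂ) (k : ℕ → Fin 3)
    (hpath : ∀ s < n, x (s + 1) - x s = (δ : ℂ) * triTau ^ (k s : ℕ))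
    (a : ℂ → ℝ) (ha : ∀ v, a v = ∑ j : Fin 3, (1 + c j v * δ))
    (α : ℂ → ℂ)
    (hα : ∀ v, α v = ∑ j : Fin 3, ((δ⁻¹ * Real.log (1 + c j v * δ) : ℝ) : ℂ) * triTau ^ (j : ℕ))
    (β : ℂ → ℝ)
    (hβ : ∀ v, Real.exp (-(δ ^ 2) * (β v) ^ 2)
        = (a v / 3) ^ (-(3 : ℤ)) * ∏ j : Fin 3, (1 + c j v * δ)) :
    ∏ s ∈ Finset.range n, (1 + c (k s) (x s) * δ) / a (x s)
      = (3 : ℝ) ^ (-(n : ℤ)) * Real.exp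
          ((2 / 3) * ∑ s ∈ Finset.range n, cinner (α (x s)) (x (s + 1) - x s)
            - (1 / 2) * ((2 / 3) * δ ^ 2 * ∑ s ∈ Finset.range n, (β (x s)) ^ 2)) := by
  have step : ∀ s ∈ range n, (1 + c (k s) (x s) * δ) / a (x s)
      = 3⁻¹ * exp (2 / 3 * cinner (α (x s)) (x (s + 1) - x s) - 1 / 3 * δ ^ 2 * β (x s) ^ 2) := by
    intro s hs
    rw [hpath s (mem_range.1 hs), ha, hα]
    exact div_sum_eq_girsanov_weight hδ.ne' (hc · _) (by rw [hβ, ha]) (k s)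
  rw [prod_congr rfl step, prod_mul_distrib, prod_const, card_range, ← exp_sum, sum_sub_distrib,
    ← mul_sum, ← mul_sum, zpow_neg, zpow_natCast, inv_pow]
  ring_nf

/-- **Discrete Girsanov identity on the directed triangular lattice** (Lemma 2.3).
For a path `x₀, …, xₙ` in the directed triangular lattice of mesh `δ` with step
directions `τ^{k_s}`, the product of the drifted transition probabilities
`a_{k_s}(x_s)/a(x_s)` equals `3^{-n} · exp(Mₙ - ½ Vₙ)`. -/
theorem discrete_girsanov_triangular
    (δ : ℝ) (hδ : 0 < δ)
    (c : Fin 3 → ℂ → ℝ)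
    (hc : ∀ k v, 0 < 1 + c k v * δ)
    (n : ℕ) (x : ℕ → ℂ) (k : ℕ → Fin 3)
    (hpath : ∀ s < n, x (s + 1) - x s = (δ : ℂ) * triTau ^ (k s : ℕ))
    (a : ℂ → ℝ) (ha : ∀ v, a v = ∑ j : Fin 3, (1 + c j v * δ))
    (α : ℂ → ℂ)
    (hα : ∀ v, α v = ∑ j : Fin 3, ((δ⁻¹ * Real.log (1 + c j v * δ) : ℝ) : ℂ) * triTau ^ (j : ℕ))
    (β : ℂ → ℝ) (hβpos : ∀ v, 0 ≤ β v)
    (hβ : ∀ v, Real.exp (-(δ ^ 2) * (β v) ^ 2)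
        = (a v / 3) ^ (-(3 : ℤ)) * ∏ j : Fin 3, (1 + c j v * δ)) :
    ∏ s ∈ Finset.range n, (1 + c (k s) (x s) * δ) / a (x s)
      = (3 : ℝ) ^ (-(n : ℤ)) * Real.exp
          ((2 / 3) * ∑ s ∈ Finset.range n, cinner (α (x s)) (x (s + 1) - x s)
            - (1 / 2) * ((2 / 3) * δ ^ 2 * ∑ s ∈ Finset.range n, (β (x s)) ^ 2)) :=
  discrete_girsanov_triangular_general δ hδ c hc n x k hpath a ha α hα β hβ
end

section
/- Exact correspondence between the drifted and the massive walk on the directed triangular lattice (Corollary 2.4 of the paper): Let δ > 0 and let c₁, c₂, c₃ ∈ ℝ be constants with a_k = 1 + c_k·δ > 0 for k = 1,2,3 and a = a₁ + a₂ + a₃. Then for every path γ = (x₀, x₁, …, xₙ) of length n in the directed triangular lattice of mesh δ, ∏_{s=0}^{n−1} a_{k_s}/a = ((a₁·a₂·a₃)^{1/3}/a)ⁿ · exp((2/3)·⟨α, xₙ − x₀⟩), where k_s ∈ {1,2,3} is the unique index with x_{s+1} − x_s = δ·τ^{k_s−1}. In particular the ratio of the drifted path weight ∏_{s} a_{k_s}/a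 to the massive path weight ((a₁·a₂·a₃)^{1/3}/a)ⁿ depends only on the endpoints x₀ and xₙ of the path and not on the path itself. -/
open Finset

/-!
Writing `a_k = 1 + c_k δ` and `α = ∑ δ⁻¹ log a_k τ^{k-1}`, the relations `⟨τʲ, τˡ⟩ = 1` for
`j = l` and `-1/2` otherwise give `(2/3)⟨α, δτ^{m-1}⟩ = log a_m - (1/3) log (a₁a₂a₃)`.
Hence every step weight factors as `a_m / a = ((a₁a₂a₃)^{1/3}/a) · exp((2/3)⟨α, x_{s+1} - x_s⟩)`,
and along a path the exponential factors telescope to `exp((2/3)⟨α, xₙ - x₀⟩)`.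
-/

lemma triTau_eq_exp_mul_I : triTau = Complex.exp ((2 * Real.pi / 3 : ℝ) * Complex.I) := by
  unfold triTau
  push_cast
  ring_nf

lemma triTau_re : triTau.re = -(1 / 2) := by
  rw [triTau_eq_exp_mul_I, Complex.exp_ofReal_mul_I_re,
    show 2 * Real.pi / 3 = Real.pi - Real.pi / 3 by ring, Real.cos_pi_sub, Real.cos_pi_div_three]

lemma triTau_im : triTau.im = √3 / 2 := by
  rw [triTau_eq_exp_mul_I, Complex.exp_ofReal_mul_I_im,
    show 2 * Real.pi / 3 = Real.pi - Real.pi / 3 by ring, Real.sin_pi_sub, Real.sin_pi_div_three]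

lemma cinner_triTau_pow (j l : Fin 3) :
    cinner (triTau ^ (j : ℕ)) (triTau ^ (l : ℕ)) = if j = l then 1 else -(1 / 2) := by
  have h3 : √3 * √3 = 3 := Real.mul_self_sqrt (by norm_num)
  unfold cinner
  fin_cases j <;> fin_cases l <;>
    simp [pow_succ, Complex.mul_re, Complex.mul_im, triTau_re, triTau_im] <;> ring_nf <;>
    nlinarith [h3]

lemma cinner_ofReal_mul_left (r : ℝ) (z w : ℂ) : cinner (r * z) w = r * cinner z w := by
  simp [cinner, mul_assoc]

lemma cinner_ofReal_mul_right (r : ℝ) (z w : ℂ) : cinner z (r * w) = r * cinner z w := by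
  simp only [cinner, map_mul, Complex.conj_ofReal, Complex.mul_re, Complex.mul_im,
    Complex.ofReal_re, Complex.ofReal_im]
  ring

lemma cinner_sum_left {ι : Type*} (s : Finset ι) (f : ι → ℂ) (w : ℂ) :
    cinner (∑ i ∈ s, f i) w = ∑ i ∈ s, cinner (f i) w := by
  simp [cinner, sum_mul, Complex.re_sum]

lemma cinner_sum_right {ι : Type*} (s : Finset ι) (z : ℂ) (f : ι → ℂ) :
    cinner z (∑ i ∈ s, f i) = ∑ i ∈ s, cinner z (f i) := by
  simp [cinner, mul_sum, Complex.re_sum]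

lemma cinner_sum_triTau_pow (β : Fin 3 → ℝ) (t : ℝ) (m : Fin 3) :
    cinner (∑ j : Fin 3, (β j : ℂ) * triTau ^ (j : ℕ)) (t * triTau ^ (m : ℕ))
      = t * (3 / 2 * β m - 1 / 2 * ∑ j, β j) := by
  rw [cinner_ofReal_mul_right]
  congr 1
  simp only [cinner_sum_left, cinner_ofReal_mul_left, cinner_triTau_pow]
  fin_cases m <;> simp [Fin.sum_univ_three] <;> ring

lemma div_sum_eq_cbrt_prod_div_sum_mul_exp_cinner {δ : ℝ} (hδ : δ ≠ 0) {a : Fin 3 → ℝ} (ha : ∀ j, 0 < a j) (m : Fin 3) :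
    a m / ∑ j, a j
      = (∏ j, a j) ^ ((1 : ℝ) / 3) / (∑ j, a j) *
        Real.exp (2 / 3 *
          cinner (∑ j : Fin 3, ((δ⁻¹ * Real.log (a j) : ℝ) : ℂ) * triTau ^ (j : ℕ))
            (δ * triTau ^ (m : ℕ))) := by
  have hexponent : 2 / 3 *
      cinner (∑ j : Fin 3, ((δ⁻¹ * Real.log (a j) : ℝ) : ℂ) * triTau ^ (j : ℕ))
        (δ * triTau ^ (m : ℕ))
      = Real.log (a m) - 1 / 3 * Real.log (∏ j, a j) := by
    rw [cinner_sum_triTau_pow, Real.log_prod fun j _ => (ha j).ne', ← mul_sum]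
    field_simp
  have hprod : 0 < ∏ j, a j := prod_pos fun j _ => ha j
  rw [hexponent, Real.exp_sub, Real.exp_log (ha m), mul_comm (1 / 3 : ℝ),
    ← Real.rpow_def_of_pos hprod, div_mul_div_comm, mul_comm _ (a m),
    mul_div_mul_right _ _ (Real.rpow_pos_of_pos hprod _).ne']

lemma prod_exp_cinner_increments (r : ℝ) (α : ℂ) (x : ℕ → ℂ) (n : ℕ) :
    ∏ s ∈ range n, Real.exp (r * cinner α (x (s + 1) - x s))
      = Real.exp (r * cinner α (x n - x 0)) := by
  rw [← Real.exp_sum, ← mul_sum, ← cinner_sum_right, sum_range_sub]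

/-- **Exact correspondence between the drifted and the massive walk on the directed
triangular lattice** (Corollary 2.4). For constant weights `a_k = 1 + c_k δ`, the drifted
path weight `∏ a_{k_s}/a` equals the massive path weight `((a₁a₂a₃)^{1/3}/a)ⁿ` times
`exp((2/3)⟨α, xₙ - x₀⟩)`, which depends only on the endpoints of the path. -/
theorem drifted_eq_massive_times_endpoint_factor
    (δ : ℝ) (hδ : 0 < δ)
    (c : Fin 3 → ℝ) (hc : ∀ k, 0 < 1 + c k * δ)
    (n : ℕ) (x : ℕ → ℂ) (k : ℕ → Fin 3)
    (hpath : ∀ s < n, x (s + 1) - x s = (δ : ℂ) * triTau ^ (k s : ℕ)) :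
    ∏ s ∈ Finset.range n, (1 + c (k s) * δ) / (∑ j : Fin 3, (1 + c j * δ))
      = ((∏ j : Fin 3, (1 + c j * δ)) ^ ((1 : ℝ) / 3) / (∑ j : Fin 3, (1 + c j * δ))) ^ n
        * Real.exp ((2 / 3) *
            cinner (∑ j : Fin 3, ((δ⁻¹ * Real.log (1 + c j * δ) : ℝ) : ℂ) * triTau ^ (j : ℕ))
              (x n - x 0)) := by
  set α : ℂ := ∑ j : Fin 3, ((δ⁻¹ * Real.log (1 + c j * δ) : ℝ) : ℂ) * triTau ^ (j : ℕ)
  calc ∏ s ∈ range n, (1 + c (k s) * δ) / (∑ j : Fin 3, (1 + c j * δ))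
      = ∏ s ∈ range n, (∏ j : Fin 3, (1 + c j * δ)) ^ ((1 : ℝ) / 3) /
          (∑ j : Fin 3, (1 + c j * δ)) * Real.exp (2 / 3 * cinner α (x (s + 1) - x s)) := by
        refine prod_congr rfl fun s hs => ?_
        rw [hpath s (mem_range.1 hs)]
        exact div_sum_eq_cbrt_prod_div_sum_mul_exp_cinner (a := fun j => 1 + c j * δ) hδ.ne' hc (k s)
    _ = _ := by rw [prod_mul_distrib, prod_const, card_range, prod_exp_cinner_increments]
end

section
/- Discrete Girsanov identity on the square lattice (Lemma 2.9 of the paper): Let δ > 0 and let c₁, c₂, c₃, c₄ : ℂ → ℝ be functions with 1 + c_k(v)·δ > 0 for every v and k, and satisfying c₁(v) + c₃(v) = c₂(v) + c₄(v) for every v. For every path γ = (x₀, x₁, …, xₙ) of length n in the square lattice of mesh δ, one has ∏_{s=0}^{n−1} a_{k_s}(x_s)/a(x_s) = 4^{−n} · exp(Mₙ − ½·Vₙ), where k_s ∈ {1,2,3,4} is the unique index with x_{s+1} − x_s = δ·i^{k_s−1}, Mₙ = (1/2)·Σ_{s=0}^{n−1} ⟨α(x_s), x_{s+1} − x_s⟩,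 and Vₙ = Σ_{s=0}^{n−1} [β₁(x_s)²·(Re(x_{s+1} − x_s))² + β₂(x_s)²·(Im(x_{s+1} − x_s))²]. -/
/-!
Each factor of the product is computed separately. At a vertex with weights `p_j = a_j(v)`, the
step `δ iᵏ` pairs `α` with the opposite directions `k` and `k + 2`, giving
`⟨α, δ iᵏ⟩ = log p_k - log p_{k+2}`, while the defining relation of `β` gives
`δ² β² = 2 log (a / 4) - log p_k - log p_{k+2}`. Half the difference of the two is
`log p_k - log (a / 4)`, so each factor is `¼ exp (…)` and the product over the path is
`4⁻ⁿ exp (Mₙ - ½ Vₙ)`.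
-/

open Finset

open Complex in
lemma cinner_sum_ofReal_mul_I_pow (w : Fin 4 → ℝ) (δ : ℝ) (κ : Fin 4) :
    cinner (∑ j : Fin 4, (w j : ℂ) * I ^ (j : ℕ)) (δ * I ^ (κ : ℕ))
      = δ * (w κ - w (κ + 2)) := by
  fin_cases κ <;> simp [cinner, Fin.sum_univ_four, pow_succ, mul_re, mul_im] <;> ring

open Real in
lemma div_eq_quarter_mul_exp {p q A β δ : ℝ} (hp : 0 < p) (hq : 0 < q) (hA : 0 < A)
    (hβ : exp (-(δ ^ 2) * β ^ 2) = p * q / (A / 4) ^ 2) :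
    p / A = 1 / 4 * exp (1 / 2 * (log p - log q) - 1 / 2 * (β ^ 2 * δ ^ 2)) := by
  have hlog := congrArg log hβ
  rw [log_exp, log_div (by positivity) (by positivity), log_mul hp.ne' hq.ne', log_pow] at hlog
  rw [show 1 / 2 * (log p - log q) - 1 / 2 * (β ^ 2 * δ ^ 2) = log p - log (A / 4) by
      push_cast at hlog; linear_combination hlog / 2,
    exp_sub, exp_log hp, exp_log (by positivity)]
  field_simp

open Complex in
lemma div_sum_eq_quarter_mul_exp {δ : ℝ} (hδ : δ ≠ 0) (p : Fin 4 → ℝ)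
    (hp : ∀ j, 0 < p j) {β₁ β₂ : ℝ}
    (hβ₁ : Real.exp (-(δ ^ 2) * β₁ ^ 2) = p 0 * p 2 / ((∑ j, p j) / 4) ^ 2)
    (hβ₂ : Real.exp (-(δ ^ 2) * β₂ ^ 2) = p 1 * p 3 / ((∑ j, p j) / 4) ^ 2) (κ : Fin 4) :
    p κ / ∑ j, p j = 1 / 4 * Real.exp
      (1 / 2 * cinner (∑ j : Fin 4, ((δ⁻¹ * Real.log (p j) : ℝ) : ℂ) * I ^ (j : ℕ))
          (δ * I ^ (κ : ℕ))
        - 1 / 2 * (β₁ ^ 2 * ((δ : ℂ) * I ^ (κ : ℕ)).re ^ 2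
          + β₂ ^ 2 * ((δ : ℂ) * I ^ (κ : ℕ)).im ^ 2)) := by
  have hS : 0 < ∑ j, p j := sum_pos (fun j _ => hp j) univ_nonempty
  rw [cinner_sum_ofReal_mul_I_pow, ← mul_sub δ⁻¹, mul_inv_cancel_left₀ hδ]
  fin_cases κ
  · convert div_eq_quarter_mul_exp (hp 0) (hp 2) hS hβ₁ using 4 <;> simp
  · convert div_eq_quarter_mul_exp (hp 1) (hp 3) hS hβ₂ using 4 <;> simp
  · convert div_eq_quarter_mul_exp (hp 2) (hp 0) hS (mul_comm (p 0) (p 2) ▸ hβ₁)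
      using 4 <;> simp [pow_succ]
  · convert div_eq_quarter_mul_exp (hp 3) (hp 1) hS (mul_comm (p 1) (p 3) ▸ hβ₂)
      using 4 <;> simp [pow_succ]

lemma prod_range_quarter_mul_exp (f : ℕ → ℝ) (n : ℕ) :
    ∏ s ∈ range n, 1 / 4 * Real.exp (f s)
      = (4 : ℝ) ^ (-(n : ℤ)) * Real.exp (∑ s ∈ range n, f s) := by
  rw [prod_mul_distrib, prod_const, card_range, ← Real.exp_sum, zpow_neg, zpow_natCast, one_div,
    inv_pow]

theorem discrete_girsanov_square_general
    (δ : ℝ) (hδ : 0 < δ)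
    (c : Fin 4 → ℂ → ℝ)
    (hc : ∀ k v, 0 < 1 + c k v * δ)
    (n : ℕ) (x : ℕ → ℂ) (k : ℕ → Fin 4)
    (hpath : ∀ s < n, x (s + 1) - x s = (δ : ℂ) * Complex.I ^ (k s : ℕ))
    (a : ℂ → ℝ) (ha : ∀ v, a v = ∑ j : Fin 4, (1 + c j v * δ))
    (α : ℂ → ℂ)
    (hα : ∀ v, α v = ∑ j : Fin 4,
        ((δ⁻¹ * Real.log (1 + c j v * δ) : ℝ) : ℂ) * Complex.I ^ (j : ℕ))
    (β₁ β₂ : ℂ → ℝ)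
    (hβ₁ : ∀ v, Real.exp (-(δ ^ 2) * (β₁ v) ^ 2)
        = (1 + c 0 v * δ) * (1 + c 2 v * δ) / (a v / 4) ^ 2)
    (hβ₂ : ∀ v, Real.exp (-(δ ^ 2) * (β₂ v) ^ 2)
        = (1 + c 1 v * δ) * (1 + c 3 v * δ) / (a v / 4) ^ 2) :
    ∏ s ∈ Finset.range n, (1 + c (k s) (x s) * δ) / a (x s)
      = (4 : ℝ) ^ (-(n : ℤ)) * Real.exp
          ((1 / 2) * ∑ s ∈ Finset.range n, cinner (α (x s)) (x (s + 1) - x s)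
            - (1 / 2) * ∑ s ∈ Finset.range n,
                ((β₁ (x s)) ^ 2 * (x (s + 1) - x s).re ^ 2
                  + (β₂ (x s)) ^ 2 * (x (s + 1) - x s).im ^ 2)) := by
  have hstep : ∀ s ∈ range n, (1 + c (k s) (x s) * δ) / a (x s)
      = 1 / 4 * Real.exp (1 / 2 * cinner (α (x s)) (x (s + 1) - x s)
        - 1 / 2 * ((β₁ (x s)) ^ 2 * (x (s + 1) - x s).re ^ 2
          + (β₂ (x s)) ^ 2 * (x (s + 1) - x s).im ^ 2)) := by
    intro s hs
    rw [hα, hpath s (mem_range.mp hs), ha]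
    exact div_sum_eq_quarter_mul_exp hδ.ne' (fun j => 1 + c j (x s) * δ) (fun j => hc j (x s))
      (ha (x s) ▸ hβ₁ (x s)) (ha (x s) ▸ hβ₂ (x s)) (k s)
  rw [prod_congr rfl hstep, prod_range_quarter_mul_exp, sum_sub_distrib, ← mul_sum, ← mul_sum]

/-- **Discrete Girsanov identity on the square lattice** (Lemma 2.9).
For a path `x₀, …, xₙ` in the square lattice of mesh `δ` with step directions `i^{k_s}`,
under the balance condition `c₁ + c₃ = c₂ + c₄`, the product of the drifted transition
probabilities `a_{k_s}(x_s)/a(x_s)` equals `4^{-n} · exp(Mₙ - ½ Vₙ)`. -/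
theorem discrete_girsanov_square
    (δ : ℝ) (hδ : 0 < δ)
    (c : Fin 4 → ℂ → ℝ)
    (hc : ∀ k v, 0 < 1 + c k v * δ)
    (hbal : ∀ v, c 0 v + c 2 v = c 1 v + c 3 v)
    (n : ℕ) (x : ℕ → ℂ) (k : ℕ → Fin 4)
    (hpath : ∀ s < n, x (s + 1) - x s = (δ : ℂ) * Complex.I ^ (k s : ℕ))
    (a : ℂ → ℝ) (ha : ∀ v, a v = ∑ j : Fin 4, (1 + c j v * δ))
    (α : ℂ → ℂ)
    (hα : ∀ v, α v = ∑ j : Fin 4,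
        ((δ⁻¹ * Real.log (1 + c j v * δ) : ℝ) : ℂ) * Complex.I ^ (j : ℕ))
    (β₁ β₂ : ℂ → ℝ) (hβ₁pos : ∀ v, 0 ≤ β₁ v) (hβ₂pos : ∀ v, 0 ≤ β₂ v)
    (hβ₁ : ∀ v, Real.exp (-(δ ^ 2) * (β₁ v) ^ 2)
        = (1 + c 0 v * δ) * (1 + c 2 v * δ) / (a v / 4) ^ 2)
    (hβ₂ : ∀ v, Real.exp (-(δ ^ 2) * (β₂ v) ^ 2)
        = (1 + c 1 v * δ) * (1 + c 3 v * δ) / (a v / 4) ^ 2) :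
    ∏ s ∈ Finset.range n, (1 + c (k s) (x s) * δ) / a (x s)
      = (4 : ℝ) ^ (-(n : ℤ)) * Real.exp
          ((1 / 2) * ∑ s ∈ Finset.range n, cinner (α (x s)) (x (s + 1) - x s)
            - (1 / 2) * ∑ s ∈ Finset.range n,
                ((β₁ (x s)) ^ 2 * (x (s + 1) - x s).re ^ 2
                  + (β₂ (x s)) ^ 2 * (x (s + 1) - x s).im ^ 2)) :=
  discrete_girsanov_square_general δ hδ c hc n x k hpath a ha α hα β₁ β₂ hβ₁ hβ₂
end

section
/- Uniqueness of the massive Green function (Lemma 3.2 of the paper): Let Ω ⊂ ℂ be a bounded, open, connected set, let u ∈ Ω, let m ≥ 0 and let k > 0. Suppose g, h : ℂ → ℝ are twice continuously differentiable on Ω \ {u} and both satisfy: (i) Δf(v) = m²·f(v) for all v ∈ Ω \ {u}, where Δf denotes the Laplacian of f (the sum of the two pure second partial derivatives, in the directions 1 and i); (ii) f vanishes at the boundary, i.e. for every ε > 0 there is η > 0 such that |f(v)| ≤ ε for all v ∈ Ω with dist(v, ∂Ω) < η; (iii) f(v) = k·log(1/|v − u|) + o(|log|v − u||) as v → u, i.e.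 (f(v) − k·log(1/|v − u|))/log(1/|v − u|) → 0 as v → u with v ∈ Ω \ {u}. Then g = h on Ω \ {u}. -/
open Filter

/-- Second directional derivative of `f : ℂ → ℝ` in the direction `d` at `v`. -/
noncomputable def secondDirDeriv (f : ℂ → ℝ) (d v : ℂ) : ℝ :=
  fderiv ℝ (fun w => fderiv ℝ f w d) v d

/-- The Laplacian of `f : ℂ → ℝ` at `v`: the sum of the two pure second partial
derivatives, in the directions `1` and `i`. -/
noncomputable def lap (f : ℂ → ℝ) (v : ℂ) : ℝ :=
  secondDirDeriv f 1 v + secondDirDeriv f Complex.I v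

/-!
The difference `f = g - h` satisfies `Δ f = m² f` off `u`, tends to `0` at `∂Ω` and is
`o(log ‖v - u‖)` at `u`. For `ε > 0` the function `f + ε b`, with the barrier
`b = log ‖z - u‖ + ‖z - u‖² - C`, is `≤ 0` near `∂Ω` and near `u`; wherever it is positive,
so is `f`, and then its Laplacian `m² f + 4ε` is positive. Since the Laplacian is `≤ 0` at an
interior maximum (second derivative test along the two coordinate lines), `f + ε b ≤ 0`
everywhere. Letting `ε → 0` gives `f ≤ 0`, and by symmetry `g = h`.
-/

open Laplacian InnerProductSpace Topology Metric Set Asymptotics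

theorem secondDirDeriv_eq_iteratedFDeriv {f : ℂ → ℝ} {v : ℂ} (hf : ContDiffAt ℝ 2 f v)
    (d : ℂ) : secondDirDeriv f d v = iteratedFDeriv ℝ 2 f v ![d, d] := by
  have hdiff : DifferentiableAt ℝ (fderiv ℝ f) v :=
    (hf.fderiv_right (m := 1) (by norm_num)).differentiableAt one_ne_zero
  rw [iteratedFDeriv_two_apply, secondDirDeriv,
    (hdiff.hasFDerivAt.clm_apply (hasFDerivAt_const d v)).fderiv]
  simp

theorem lap_eq_laplacian {f : ℂ → ℝ} {v : ℂ} (hf : ContDiffAt ℝ 2 f v) :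
    lap f v = Δ f v := by
  rw [lap, laplacian_eq_iteratedFDeriv_complexPlane, secondDirDeriv_eq_iteratedFDeriv hf,
    secondDirDeriv_eq_iteratedFDeriv hf]

theorem secondDirDeriv_norm_sub_sq (u d v : ℂ) :
    secondDirDeriv (fun z => ‖z - u‖ ^ 2) d v = 2 * ‖d‖ ^ 2 := by
  have hfirst :
      (fun w => fderiv ℝ (fun z => ‖z - u‖ ^ 2) w d) = fun w => 2 * inner ℝ (w - u) d := by
    funext w
    rw [((hasFDerivAt_sub_const (𝕜 := ℝ) (x := w) u).norm_sq).fderiv]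
    simp only [smul_apply, ContinuousLinearMap.comp_apply, innerSL_apply_apply,
      ContinuousLinearMap.id_apply, nsmul_eq_mul, Nat.cast_ofNat]
  have hsecond := ((hasFDerivAt_sub_const (𝕜 := ℝ) (x := v) u).inner ℝ
    (hasFDerivAt_const d v)).const_mul 2
  rw [secondDirDeriv, hfirst, hsecond.fderiv]
  simp

theorem laplacian_norm_sub_sq (u v : ℂ) : Δ (fun z => ‖z - u‖ ^ 2) v = 4 := by
  have hC : ContDiff ℝ 2 (fun z : ℂ => ‖z - u‖ ^ 2) :=
    (contDiff_id.sub contDiff_const).norm_sq ℝ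
  rw [← lap_eq_laplacian hC.contDiffAt, lap, secondDirDeriv_norm_sub_sq,
    secondDirDeriv_norm_sub_sq]
  norm_num

theorem IsLocalMax.deriv_deriv_nonpos {f : ℝ → ℝ} {x : ℝ} (hmax : IsLocalMax f x)
    (hf : ContinuousAt f x) : deriv (deriv f) x ≤ 0 := by
  by_contra! hpos
  have hmin := isLocalMin_of_deriv_deriv_pos hpos hmax.deriv_eq_zero hf
  have hconst : f =ᶠ[𝓝 x] fun _ => f x :=
    (hmin.and hmax).mono fun y hy => le_antisymm hy.2 hy.1
  rw [hconst.deriv.deriv_eq] at hpos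
  simp at hpos

theorem IsLocalMax.secondDirDeriv_nonpos {W : ℂ → ℝ} {v : ℂ} (hmax : IsLocalMax W v)
    (hW : ContDiffAt ℝ 2 W v) (d : ℂ) : secondDirDeriv W d v ≤ 0 := by
  let line : ℝ → ℂ := fun t => v + t • d
  have hline : ∀ t, HasDerivAt line d t := fun t => by
    simpa only [one_smul] using ((hasDerivAt_id' t).smul_const d).const_add v
  have hline0 : line 0 = v := by simp [line]
  have htend : Tendsto line (𝓝 0) (𝓝 v) := hline0 ▸ (hline 0).continuousAt.tendsto
  have hWdiff : ∀ᶠ w in 𝓝 v, DifferentiableAt ℝ W w :=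
    (hW.eventually (by simp)).mono fun w hw => hw.differentiableAt (by norm_num)
  have hWd : DifferentiableAt ℝ (fun w => fderiv ℝ W w d) v :=
    ((hW.fderiv_right (m := 1) (by norm_num)).differentiableAt one_ne_zero).clm_apply
      (differentiableAt_const d)
  have hderiv : deriv (W ∘ line) =ᶠ[𝓝 0] fun t => fderiv ℝ W (line t) d :=
    (htend.eventually hWdiff).mono fun t ht =>
      (ht.hasFDerivAt.comp_hasDerivAt t (hline t)).deriv
  have hsecond : deriv (deriv (W ∘ line)) 0 = secondDirDeriv W d v := by
    rw [hderiv.deriv_eq, secondDirDeriv]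
    exact (hWd.hasFDerivAt.comp_hasDerivAt_of_eq 0 (hline 0) hline0.symm).deriv
  rw [← hsecond]
  rw [← hline0] at hmax
  exact (hmax.comp_continuous (hline 0).continuousAt).deriv_deriv_nonpos
    (hW.continuousAt.comp_of_eq (hline 0).continuousAt hline0)

theorem IsLocalMax.laplacian_nonpos {W : ℂ → ℝ} {v : ℂ} (hmax : IsLocalMax W v)
    (hW : ContDiffAt ℝ 2 W v) : Δ W v ≤ 0 := by
  rw [← lap_eq_laplacian hW, lap]
  exact add_nonpos (hmax.secondDirDeriv_nonpos hW 1)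
    (hmax.secondDirDeriv_nonpos hW Complex.I)

theorem nonpos_of_laplacian_pos_of_nonpos_off_compact {O K : Set ℂ} {W : ℂ → ℝ}
    (hO : IsOpen O) (hK : IsCompact K) (hKO : K ⊆ O) (hW : ContDiffOn ℝ 2 W O)
    (hΔ : ∀ v ∈ O, 0 < W v → 0 < Δ W v) (hout : ∀ v ∈ O \ K, W v ≤ 0) :
    ∀ v ∈ O, W v ≤ 0 := by
  intro z hz
  by_contra! hzpos
  have hzK : z ∈ K := by
    by_contra hzK
    exact (hout z ⟨hz, hzK⟩).not_gt hzpos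
  obtain ⟨v, hvK, hvmax⟩ := hK.exists_isMaxOn ⟨z, hzK⟩ (hW.continuousOn.mono hKO)
  have hvpos : 0 < W v := hzpos.trans_le (hvmax hzK)
  have hvO : O ∈ 𝓝 v := hO.mem_nhds (hKO hvK)
  have hmaxO : IsMaxOn W O v := fun w hw => by
    by_cases hwK : w ∈ K
    · exact hvmax hwK
    · exact (hout w ⟨hw, hwK⟩).trans hvpos.le
  exact (hΔ v (hKO hvK) hvpos).not_ge
    ((hmaxO.isLocalMax hvO).laplacian_nonpos (hW.contDiffAt hvO))

theorem exists_isCompact_subset_diff_singleton {X : Type*} [PseudoMetricSpace X] [ProperSpace X]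
    {Ω : Set X} (hΩo : IsOpen Ω) (hΩb : Bornology.IsBounded Ω) (u : X) {η r : ℝ} (hη : 0 < η)
    (hr : 0 < r) :
    ∃ K, IsCompact K ∧ K ⊆ Ω \ {u} ∧
      ∀ v ∈ Ω \ {u}, v ∉ K → infDist v (frontier Ω) < η ∨ dist v u < r := by
  refine ⟨closure Ω ∩ {z | η ≤ infDist z (frontier Ω)} ∩ {z | r ≤ dist z u}, ?_, ?_, ?_⟩
  · refine isCompact_of_isClosed_isBounded ?_ (hΩb.closure.subset fun z hz => hz.1.1)
    exact (isClosed_closure.inter (isClosed_le continuous_const (continuous_infDist_pt _))).inter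
      (isClosed_le continuous_const (continuous_id.dist continuous_const))
  · rintro z ⟨⟨hzΩ, hzη⟩, hzr⟩
    refine ⟨by_contra fun hz => ?_, fun hzu => ?_⟩
    · have : infDist z (frontier Ω) = 0 := infDist_zero_of_mem (hΩo.frontier_eq ▸ ⟨hzΩ, hz⟩)
      exact hη.not_ge (this ▸ hzη)
    · exact hr.not_ge (by simpa [show z = u from hzu] using hzr)
  · intro v hv hvK
    by_contra! h
    exact hvK ⟨⟨subset_closure hv.1, h.1⟩, h.2⟩

theorem eventually_log_norm_sub_neg {E : Type*} [NormedAddCommGroup E] (u : E) :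
    ∀ᶠ v in 𝓝[≠] u, Real.log ‖v - u‖ < 0 :=
  (Real.tendsto_log_nhdsGT_zero.comp (tendsto_norm_sub_self_nhdsNE u)).eventually
    (eventually_lt_atBot 0)

/-- `log ‖z - u‖` is harmonic and dominates an `o(log ‖z - u‖)` singularity, `‖z - u‖ ^ 2` makes
the Laplacian positive, and the constant makes `barrier u R ≤ -1` on `closedBall u R`. -/
noncomputable def barrier (u : ℂ) (R : ℝ) (z : ℂ) : ℝ :=
  Real.log ‖z - u‖ + ‖z - u‖ ^ 2 - (1 + Real.log R + R ^ 2)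

section barrier

variable {u z : ℂ} {R : ℝ}

theorem barrier_le_neg_one (hz : z ∈ closedBall u R) (hzu : z ≠ u) : barrier u R z ≤ -1 := by
  rw [mem_closedBall, dist_eq_norm] at hz
  have hpos : 0 < ‖z - u‖ := norm_pos_iff.2 (sub_ne_zero.2 hzu)
  have hlog := Real.log_le_log hpos hz
  have hsq := pow_le_pow_left₀ hpos.le hz 2
  rw [barrier]
  linarith

theorem barrier_le_log (hR : 1 ≤ R) (hz : z ∈ closedBall u R) :
    barrier u R z ≤ Real.log ‖z - u‖ := by
  rw [mem_closedBall, dist_eq_norm] at hz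
  have hsq := pow_le_pow_left₀ (norm_nonneg _) hz 2
  have hlogR := Real.log_nonneg hR
  rw [barrier]
  linarith

theorem harmonicAt_log_norm_sub (hzu : z ≠ u) : HarmonicAt (fun w => Real.log ‖w - u‖) z :=
  (analyticAt_id.sub analyticAt_const).harmonicAt_log_norm (sub_ne_zero.2 hzu)

theorem contDiffAt_barrier (hzu : z ≠ u) : ContDiffAt ℝ 2 (barrier u R) z :=
  (((harmonicAt_log_norm_sub hzu).1.add
    ((contDiff_id.sub contDiff_const).norm_sq ℝ).contDiffAt).sub contDiffAt_const)

theorem laplacian_barrier (hzu : z ≠ u) : Δ (barrier u R) z = 4 := by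
  have hlog := harmonicAt_log_norm_sub hzu
  have hsq : ContDiffAt ℝ 2 (fun w : ℂ => ‖w - u‖ ^ 2) z :=
    ((contDiff_id.sub contDiff_const).norm_sq ℝ).contDiffAt
  have hsum : ContDiffAt ℝ 2 ((fun w => Real.log ‖w - u‖) + fun w => ‖w - u‖ ^ 2) z :=
    hlog.1.add hsq
  have hsplit : barrier u R = (fun w => Real.log ‖w - u‖) + (fun w => ‖w - u‖ ^ 2)
      - fun _ => 1 + Real.log R + R ^ 2 := rfl
  rw [hsplit, hsum.laplacian_sub contDiffAt_const, hlog.1.laplacian_add hsq,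
    hlog.2.self_of_nhds, laplacian_norm_sub_sq]
  simp

end barrier

theorem exists_forall_le_neg_mul_log_of_isLittleO {E : Type*} [NormedAddCommGroup E]
    {O : Set E} {u : E} {f : E → ℝ} (hO : O ⊆ {u}ᶜ)
    (hf : f =o[𝓝[O] u] fun v => Real.log ‖v - u‖) {ε : ℝ} (hε : 0 < ε) :
    ∃ r > 0, ∀ v ∈ O, dist v u < r → f v ≤ -ε * Real.log ‖v - u‖ := by
  have hneg : ∀ᶠ v in 𝓝[O] u, Real.log ‖v - u‖ < 0 :=
    (eventually_log_norm_sub_neg u).filter_mono (nhdsWithin_mono u hO)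
  have hev : ∀ᶠ v in 𝓝[O] u, f v ≤ -ε * Real.log ‖v - u‖ := by
    filter_upwards [hf.bound hε, hneg] with v hbound hlog
    rw [Real.norm_eq_abs, Real.norm_eq_abs, abs_of_neg hlog] at hbound
    linarith [le_abs_self (f v)]
  obtain ⟨r, hr, H⟩ := Metric.eventually_nhds_iff.1 (eventually_nhdsWithin_iff.1 hev)
  exact ⟨r, hr, fun v hv hvr => H hvr hv⟩

section comparison

variable {Ω : Set ℂ} {u : ℂ} {m : ℝ} {f : ℂ → ℝ}

theorem add_mul_barrier_nonpos (hΩo : IsOpen Ω) (hΩb : Bornology.IsBounded Ω) {R : ℝ}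
    (hR : 1 ≤ R) (hΩR : Ω ⊆ closedBall u R) (hf : ContDiffOn ℝ 2 f (Ω \ {u}))
    (hΔ : ∀ v ∈ Ω \ {u}, Δ f v = m ^ 2 * f v) {ε η r : ℝ} (hε : 0 < ε) (hη : 0 < η)
    (hr : 0 < r)
    (hbdry : ∀ v ∈ Ω, infDist v (frontier Ω) < η → f v ≤ ε)
    (hsing : ∀ v ∈ Ω \ {u}, dist v u < r → f v ≤ -ε * Real.log ‖v - u‖) :
    ∀ v ∈ Ω \ {u}, f v + ε * barrier u R v ≤ 0 := by
  have hO : IsOpen (Ω \ {u}) := hΩo.sdiff isClosed_singleton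
  have hbar : ∀ v ∈ Ω \ {u}, ContDiffAt ℝ 2 (ε • barrier u R) v :=
    fun v hv => (contDiffAt_barrier hv.2).const_smul ε
  obtain ⟨K, hK, hKO, hout⟩ := exists_isCompact_subset_diff_singleton hΩo hΩb u hη hr
  refine nonpos_of_laplacian_pos_of_nonpos_off_compact (W := f + ε • barrier u R) hO hK hKO
    (hf.add fun v hv => (hbar v hv).contDiffWithinAt)
    (fun v hv hpos => ?_) (fun v ⟨hv, hvK⟩ => ?_)
  · have hfv : 0 < f v := by
      have := barrier_le_neg_one (hΩR hv.1) hv.2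
      simp only [Pi.add_apply, Pi.smul_apply, smul_eq_mul] at hpos
      nlinarith
    rw [(hf.contDiffAt (hO.mem_nhds hv)).laplacian_add (hbar v hv),
      laplacian_smul ε (contDiffAt_barrier hv.2), hΔ v hv, laplacian_barrier hv.2, smul_eq_mul]
    positivity
  · show f v + ε * barrier u R v ≤ 0
    have hneg := barrier_le_neg_one (hΩR hv.1) hv.2
    rcases hout v hv hvK with hnear | hnear
    · nlinarith [hbdry v hv.1 hnear]
    · nlinarith [hsing v hv hnear, barrier_le_log (R := R) hR (hΩR hv.1)]

theorem nonpos_of_laplacian_eq_sq_mul (hΩo : IsOpen Ω) (hΩb : Bornology.IsBounded Ω)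
    (hf : ContDiffOn ℝ 2 f (Ω \ {u})) (hΔ : ∀ v ∈ Ω \ {u}, Δ f v = m ^ 2 * f v)
    (hbdry : ∀ ε > 0, ∃ η > 0, ∀ v ∈ Ω, infDist v (frontier Ω) < η → f v ≤ ε)
    (hsing : f =o[𝓝[Ω \ {u}] u] fun v => Real.log ‖v - u‖) :
    ∀ v ∈ Ω \ {u}, f v ≤ 0 := by
  obtain ⟨R₀, hR₀⟩ := hΩb.subset_closedBall u
  have hΩR : Ω ⊆ closedBall u (max R₀ 1) :=
    hR₀.trans (closedBall_subset_closedBall (le_max_left _ _))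
  intro v hv
  have hbv : 0 < -barrier u (max R₀ 1) v := by linarith [barrier_le_neg_one (hΩR hv.1) hv.2]
  refine le_of_forall_pos_le_add fun δ hδ => ?_
  set ε := δ / -barrier u (max R₀ 1) v
  have hε : 0 < ε := div_pos hδ hbv
  obtain ⟨η, hη, hbdryε⟩ := hbdry ε hε
  obtain ⟨r, hr, hsingε⟩ :=
    exists_forall_le_neg_mul_log_of_isLittleO (sdiff_subset_compl Ω {u}) hsing hε
  have hW := add_mul_barrier_nonpos hΩo hΩb (le_max_right R₀ 1) hΩR hf hΔ hε hη hr hbdryε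
    hsingε v hv
  have : ε * barrier u (max R₀ 1) v = -δ := by
    have : barrier u (max R₀ 1) v ≠ 0 := (neg_pos.1 hbv).ne
    simp only [ε]
    field_simp
  linarith

end comparison

structure IsMassiveGreenFunction (Ω : Set ℂ) (u : ℂ) (m k : ℝ) (f : ℂ → ℝ) : Prop where
  contDiffOn : ContDiffOn ℝ 2 f (Ω \ {u})
  lap_eq : ∀ v ∈ Ω \ {u}, lap f v = m ^ 2 * f v
  abs_le_of_infDist_frontier_lt :
    ∀ ε > 0, ∃ η > 0, ∀ v ∈ Ω, infDist v (frontier Ω) < η → |f v| ≤ ε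
  tendsto_singularity :
    Tendsto (fun v => (f v - k * Real.log (1 / ‖v - u‖)) / Real.log (1 / ‖v - u‖))
      (𝓝[Ω \ {u}] u) (𝓝 0)

namespace IsMassiveGreenFunction

variable {Ω : Set ℂ} {u : ℂ} {m k : ℝ} {f g h : ℂ → ℝ}

theorem laplacian_eq (hf : IsMassiveGreenFunction Ω u m k f) (hΩo : IsOpen Ω) :
    ∀ v ∈ Ω \ {u}, Δ f v = m ^ 2 * f v := fun v hv => by
  rw [← lap_eq_laplacian (hf.contDiffOn.contDiffAt
    ((hΩo.sdiff isClosed_singleton).mem_nhds hv)), hf.lap_eq v hv]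

theorem isLittleO (hf : IsMassiveGreenFunction Ω u m k f) :
    (fun v => f v - k * Real.log (1 / ‖v - u‖)) =o[𝓝[Ω \ {u}] u]
      fun v => Real.log ‖v - u‖ := by
  have hlog : ∀ v : ℂ, Real.log (1 / ‖v - u‖) = -Real.log ‖v - u‖ := fun v => by
    rw [one_div, Real.log_inv]
  have hne : ∀ᶠ v in 𝓝[Ω \ {u}] u, Real.log (1 / ‖v - u‖) ≠ 0 :=
    ((eventually_log_norm_sub_neg u).filter_mono
      (nhdsWithin_mono u (sdiff_subset_compl Ω {u}))).mono
      fun v hv => hlog v ▸ neg_ne_zero.2 hv.ne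
  have hdiv := (isLittleO_iff_tendsto' (hne.mono fun v hv h0 => absurd h0 hv)).2
    hf.tendsto_singularity
  exact isLittleO_neg_right.1 (hdiv.congr_right hlog)

theorem le (hg : IsMassiveGreenFunction Ω u m k g) (hh : IsMassiveGreenFunction Ω u m k h)
    (hΩo : IsOpen Ω) (hΩb : Bornology.IsBounded Ω) : ∀ v ∈ Ω \ {u}, g v ≤ h v := by
  refine fun v hv => sub_nonpos.1 <|
    nonpos_of_laplacian_eq_sq_mul (m := m) (f := g - h) hΩo hΩb (hg.contDiffOn.sub hh.contDiffOn)
      (fun w hw => ?_) (fun ε hε => ?_) ?_ v hv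
  · have hO := (hΩo.sdiff isClosed_singleton).mem_nhds hw
    rw [(hg.contDiffOn.contDiffAt hO).laplacian_sub (hh.contDiffOn.contDiffAt hO),
      hg.laplacian_eq hΩo w hw, hh.laplacian_eq hΩo w hw, Pi.sub_apply, mul_sub]
  · obtain ⟨η₁, hη₁, Hg⟩ := hg.abs_le_of_infDist_frontier_lt (ε / 2) (half_pos hε)
    obtain ⟨η₂, hη₂, Hh⟩ := hh.abs_le_of_infDist_frontier_lt (ε / 2) (half_pos hε)
    refine ⟨min η₁ η₂, lt_min hη₁ hη₂, fun w hw hwη => ?_⟩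
    have hgw := abs_le.1 (Hg w hw (hwη.trans_le (min_le_left _ _)))
    have hhw := abs_le.1 (Hh w hw (hwη.trans_le (min_le_right _ _)))
    simp only [Pi.sub_apply]
    linarith [hgw.2, hhw.1]
  · exact (hg.isLittleO.sub hh.isLittleO).congr_left fun w => by simp only [Pi.sub_apply]; ring

end IsMassiveGreenFunction

theorem massive_green_function_unique_general
    (Ω : Set ℂ) (hΩo : IsOpen Ω) (hΩb : Bornology.IsBounded Ω)
    (u : ℂ) (m : ℝ) (k : ℝ)
    (g h : ℂ → ℝ)
    (hgC : ContDiffOn ℝ 2 g (Ω \ {u})) (hhC : ContDiffOn ℝ 2 h (Ω \ {u}))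
    (hgLap : ∀ v ∈ Ω \ {u}, lap g v = m ^ 2 * g v)
    (hhLap : ∀ v ∈ Ω \ {u}, lap h v = m ^ 2 * h v)
    (hgBdry : ∀ ε > 0, ∃ η > 0, ∀ v ∈ Ω, Metric.infDist v (frontier Ω) < η → |g v| ≤ ε)
    (hhBdry : ∀ ε > 0, ∃ η > 0, ∀ v ∈ Ω, Metric.infDist v (frontier Ω) < η → |h v| ≤ ε)
    (hgSing : Tendsto
      (fun v => (g v - k * Real.log (1 / ‖v - u‖))
                  / Real.log (1 / ‖v - u‖))
      (nhdsWithin u (Ω \ {u})) (nhds 0))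
    (hhSing : Tendsto
      (fun v => (h v - k * Real.log (1 / ‖v - u‖))
                  / Real.log (1 / ‖v - u‖))
      (nhdsWithin u (Ω \ {u})) (nhds 0)) :
    Set.EqOn g h (Ω \ {u}) := by
  have hg : IsMassiveGreenFunction Ω u m k g := ⟨hgC, hgLap, hgBdry, hgSing⟩
  have hh : IsMassiveGreenFunction Ω u m k h := ⟨hhC, hhLap, hhBdry, hhSing⟩
  exact fun v hv => le_antisymm (hg.le hh hΩo hΩb v hv) (hh.le hg hΩo hΩb v hv)

/-- **Uniqueness of the massive Green function** (Lemma 3.2). If `g` and `h` are both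
massive harmonic with mass `m` on `Ω \ {u}`, vanish at the boundary of the bounded
domain `Ω`, and have a logarithmic singularity `k·log(1/|v-u|) + o(|log|v-u||)` at `u`,
then `g = h` on `Ω \ {u}`. -/
theorem massive_green_function_unique
    (Ω : Set ℂ) (hΩo : IsOpen Ω) (hΩb : Bornology.IsBounded Ω) (hΩc : IsConnected Ω)
    (u : ℂ) (hu : u ∈ Ω) (m : ℝ) (hm : 0 ≤ m) (k : ℝ) (hk : 0 < k)
    (g h : ℂ → ℝ)
    (hgC : ContDiffOn ℝ 2 g (Ω \ {u})) (hhC : ContDiffOn ℝ 2 h (Ω \ {u}))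
    (hgLap : ∀ v ∈ Ω \ {u}, lap g v = m ^ 2 * g v)
    (hhLap : ∀ v ∈ Ω \ {u}, lap h v = m ^ 2 * h v)
    (hgBdry : ∀ ε > 0, ∃ η > 0, ∀ v ∈ Ω, Metric.infDist v (frontier Ω) < η → |g v| ≤ ε)
    (hhBdry : ∀ ε > 0, ∃ η > 0, ∀ v ∈ Ω, Metric.infDist v (frontier Ω) < η → |h v| ≤ ε)
    (hgSing : Tendsto
      (fun v => (g v - k * Real.log (1 / ‖v - u‖))
                  / Real.log (1 / ‖v - u‖))
      (nhdsWithin u (Ω \ {u})) (nhds 0))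
    (hhSing : Tendsto
      (fun v => (h v - k * Real.log (1 / ‖v - u‖))
                  / Real.log (1 / ‖v - u‖))
      (nhdsWithin u (Ω \ {u})) (nhds 0)) :
    Set.EqOn g h (Ω \ {u}) :=
  massive_green_function_unique_general Ω hΩo hΩb u m k g h hgC hhC hgLap hhLap hgBdry hhBdry hgSing
    hhSing
end

section
/- Monotonicity of trinomial point probabilities in the displacement (Lemma 3.9 of the paper): Let n ≥ 1 be an integer and let (a₁, a₂, a₃) and (b₁, b₂, b₃) be triples of nonnegative integers with a₁ + a₂ + a₃ = b₁ + b₂ + b₃ = n. If |b₁ + b₂·τ + b₃·τ²| < (1/2)·|a₁ + a₂·τ + a₃·τ²|, then n!/(b₁!·b₂!·b₃!) ≥ n!/(a₁!·a₂!·a₃!). Equivalently: for the simple random walk on the directed triangular lattice started at a point x, if z is any point reachable in exactly n steps with |z − x| < (1/2)·|y − x|, then the probability of being at z after n steps is at least the probability of being at y after n steps. -/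
/-!
Since `1 + τ + τ² = 0` and `conj τ = τ²`, the squared modulus of `c₁ + c₂τ + c₃τ²` is the
quadratic form `Q(c) = c₁² + c₂² + c₃² - c₁c₂ - c₂c₃ - c₃c₁`, and for `c₁ + c₂ + c₃ = n` one has
`4Q(c) = (3c₁ - n)² + 3(c₂ - c₃)²`. If `a₁ ≥ a₂ ≥ a₃`, then `Q(a) ≤ (3a₁ - n)²` and
`Q(a) ≤ (n - 3a₃)²`, so `4Q(b) < Q(a)` forces every `bᵢ` into `[a₃, a₁]`. As `k ↦ log k!` is
convex, such a triple `b` has a smaller product of factorials than `a`: two moves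
`u! v! ≤ (u + d)! (v - d)!` with `v - d ≤ u` carry `b` to `a`.
-/

open Nat ComplexConjugate

theorem isPrimitiveRoot_triTau : IsPrimitiveRoot triTau 3 := by
  simpa [triTau] using Complex.isPrimitiveRoot_exp 3 (by norm_num)

theorem one_add_triTau_add_triTau_sq : 1 + triTau + triTau ^ 2 = 0 := by
  simpa [Finset.sum_range_succ] using isPrimitiveRoot_triTau.geom_sum_eq_zero (by norm_num)

theorem conj_triTau : conj triTau = triTau ^ 2 := by
  have h3 := isPrimitiveRoot_triTau.pow_eq_one
  rw [← Complex.inv_eq_conj (Complex.norm_eq_one_of_pow_eq_one h3 (by norm_num))]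
  exact inv_eq_of_mul_eq_one_right (by linear_combination h3)

noncomputable def triNormSq (c₁ c₂ c₃ : ℝ) : ℝ :=
  c₁ ^ 2 + c₂ ^ 2 + c₃ ^ 2 - c₁ * c₂ - c₂ * c₃ - c₃ * c₁

theorem norm_sq_displacement (c₁ c₂ c₃ : ℝ) :
    ‖(c₁ : ℂ) + c₂ * triTau + c₃ * triTau ^ 2‖ ^ 2 = triNormSq c₁ c₂ c₃ := by
  set z : ℂ := c₁ + c₂ * triTau + c₃ * triTau ^ 2
  have h3 := isPrimitiveRoot_triTau.pow_eq_one
  have hconj : conj z = c₁ + c₂ * triTau ^ 2 + c₃ * triTau := by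
    simp only [z, map_add, map_mul, map_pow, Complex.conj_ofReal, conj_triTau]
    linear_combination c₃ * triTau * h3
  have : (‖z‖ ^ 2 : ℂ) = triNormSq c₁ c₂ c₃ := by
    rw [← Complex.mul_conj', hconj, triNormSq]
    push_cast
    linear_combination (c₂ ^ 2 + c₃ ^ 2 + c₂ * c₃ * triTau) * h3
      + (c₁ * c₂ + c₂ * c₃ + c₃ * c₁) * one_add_triTau_add_triTau_sq
  exact_mod_cast this

theorem triNormSq_swap₁₂ (x y z : ℝ) : triNormSq y x z = triNormSq x y z := by
  rw [triNormSq, triNormSq]; ring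

theorem triNormSq_swap₂₃ (x y z : ℝ) : triNormSq x z y = triNormSq x y z := by
  rw [triNormSq, triNormSq]; ring

theorem triNormSq_rotate (x y z : ℝ) : triNormSq y z x = triNormSq x y z := by
  rw [triNormSq, triNormSq]; ring

theorem lt_and_lt_of_four_mul_triNormSq_lt {x y z p q r : ℝ} (hyx : y ≤ x) (hzy : z ≤ y)
    (hsum : p + q + r = x + y + z) (h : 4 * triNormSq p q r < triNormSq x y z) :
    z < p ∧ p < x := by
  have hp : (2 * p - q - r) ^ 2 ≤ 4 * triNormSq p q r := by
    rw [triNormSq]; nlinarith [sq_nonneg (q - r)]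
  have hx : triNormSq x y z ≤ (2 * x - y - z) ^ 2 := by
    rw [triNormSq]; nlinarith [mul_nonneg (sub_nonneg.2 hyx) (sub_nonneg.2 (hzy.trans hyx))]
  have hz : triNormSq x y z ≤ (x + y - 2 * z) ^ 2 := by
    rw [triNormSq]; nlinarith [mul_nonneg (sub_nonneg.2 (hzy.trans hyx)) (sub_nonneg.2 hzy)]
  have hpx := abs_lt.1 (abs_lt_of_sq_lt_sq (hp.trans_lt (h.trans_le hx)) (by linarith))
  have hpz := abs_lt.1 (abs_lt_of_sq_lt_sq (hp.trans_lt (h.trans_le hz)) (by linarith))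
  constructor <;> linarith [hpx.1, hpz.2]

theorem Nat.factorial_mul_factorial_add_le {u y : ℕ} (h : y ≤ u) (d : ℕ) :
    u ! * (y + d)! ≤ (u + d)! * y ! := by
  rw [← factorial_mul_ascFactorial y d, ← factorial_mul_ascFactorial u d]
  calc u ! * (y ! * (y + 1).ascFactorial d) = u ! * y ! * (y + 1).ascFactorial d := by ring
    _ ≤ u ! * y ! * (u + 1).ascFactorial d := by gcongr
    _ = u ! * (u + 1).ascFactorial d * y ! := by ring

theorem Nat.factorial_mul_factorial_le_of_add_eq {u v x y : ℕ} (hsum : u + v = x + y)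
    (hu : u ≤ x) (hv : v ≤ x) : u ! * v ! ≤ x ! * y ! := by
  obtain ⟨d, rfl⟩ := Nat.exists_eq_add_of_le hu
  obtain rfl : v = y + d := by omega
  exact factorial_mul_factorial_add_le (by omega) d

theorem Nat.factorial_mul_factorial_mul_factorial_le {p q r x y z : ℕ}
    (hsum : p + q + r = x + y + z) (hp : p ∈ Set.Icc z x) (hq : q ∈ Set.Icc z x)
    (hr : r ∈ Set.Icc z x) : p ! * q ! * r ! ≤ x ! * y ! * z ! := by
  obtain ⟨hzp, hpx⟩ := hp
  obtain ⟨hzq, hqx⟩ := hq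
  obtain ⟨hzr, hrx⟩ := hr
  -- Lower `r` to `z` first if that keeps `p` below `x`; otherwise raise `p` to `x` first.
  rcases le_or_gt (p + r) (x + z) with hle | hgt
  · obtain ⟨t, ht⟩ : ∃ t, p + r = t + z := ⟨p + r - z, by omega⟩
    calc p ! * q ! * r ! = p ! * r ! * q ! := by ring
      _ ≤ t ! * z ! * q ! :=
        Nat.mul_le_mul_right _ (factorial_mul_factorial_le_of_add_eq ht (by omega) (by omega))
      _ = t ! * q ! * z ! := by ring
      _ ≤ x ! * y ! * z ! :=
        Nat.mul_le_mul_right _ (factorial_mul_factorial_le_of_add_eq (by omega) (by omega) hqx)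
  · obtain ⟨t, ht⟩ : ∃ t, p + r = x + t := ⟨p + r - x, by omega⟩
    calc p ! * q ! * r ! = p ! * r ! * q ! := by ring
      _ ≤ x ! * t ! * q ! :=
        Nat.mul_le_mul_right _ (factorial_mul_factorial_le_of_add_eq ht hpx hrx)
      _ = x ! * (q ! * t !) := by ring
      _ ≤ x ! * (y ! * z !) :=
        Nat.mul_le_mul_left _
          (factorial_mul_factorial_le_of_add_eq (by omega) (by omega) (by omega))
      _ = x ! * y ! * z ! := by ring

theorem forall₃_of_sorted {α : Type*} [LinearOrder α] {P : α → α → α → Prop}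
    (swap₁₂ : ∀ x y z, P x y z → P y x z) (swap₂₃ : ∀ x y z, P x y z → P x z y)
    (sorted : ∀ x y z, y ≤ x → z ≤ y → P x y z) (x y z : α) : P x y z := by
  suffices h : ∀ x y z, y ≤ x → P x y z by
    rcases le_total y x with hyx | hxy
    exacts [h x y z hyx, swap₁₂ _ _ _ (h y x z hxy)]
  intro x y z hyx
  rcases le_total z y with hzy | hyz
  · exact sorted x y z hyx hzy
  rcases le_total z x with hzx | hxz
  · exact swap₂₃ _ _ _ (sorted x z y hzx hyz)
  · exact swap₂₃ _ _ _ (swap₁₂ _ _ _ (sorted z x y hxz hyx))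

theorem factorial_mul_factorial_mul_factorial_le_of_four_mul_triNormSq_lt {x y z p q r : ℕ}
    (hsum : p + q + r = x + y + z) (h : 4 * triNormSq p q r < triNormSq x y z) :
    p ! * q ! * r ! ≤ x ! * y ! * z ! := by
  revert hsum h
  refine forall₃_of_sorted (P := fun x y z ↦ p + q + r = x + y + z →
    4 * triNormSq p q r < triNormSq x y z → p ! * q ! * r ! ≤ x ! * y ! * z !) ?_ ?_ ?_ x y z
  · intro x y z h hsum hlt
    rw [triNormSq_swap₁₂ (x : ℝ)] at hlt
    simpa only [mul_comm (x !)] using h (by omega) hlt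
  · intro x y z h hsum hlt
    rw [triNormSq_swap₂₃ (x : ℝ)] at hlt
    simpa only [mul_right_comm _ (y !)] using h (by omega) hlt
  intro x y z hyx hzy hsum hlt
  have hyx' : (y : ℝ) ≤ x := by exact_mod_cast hyx
  have hzy' : (z : ℝ) ≤ y := by exact_mod_cast hzy
  have hsum' : (p : ℝ) + q + r = x + y + z := by exact_mod_cast hsum
  have hp := lt_and_lt_of_four_mul_triNormSq_lt hyx' hzy' hsum' hlt
  have hq := lt_and_lt_of_four_mul_triNormSq_lt hyx' hzy' (by linarith)
    (by rwa [triNormSq_rotate] : 4 * triNormSq q r p < _)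
  have hr := lt_and_lt_of_four_mul_triNormSq_lt hyx' hzy' (by linarith)
    (by rwa [← triNormSq_rotate] : 4 * triNormSq r p q < _)
  norm_cast at hp hq hr
  exact factorial_mul_factorial_mul_factorial_le hsum ⟨hp.1.le, hp.2.le⟩ ⟨hq.1.le, hq.2.le⟩
    ⟨hr.1.le, hr.2.le⟩

theorem trinomial_monotone_in_displacement_general
    (n : ℕ) (a₁ a₂ a₃ b₁ b₂ b₃ : ℕ)
    (ha : a₁ + a₂ + a₃ = n) (hb : b₁ + b₂ + b₃ = n)
    (hlt : ‖(b₁ : ℂ) + (b₂ : ℂ) * triTau + (b₃ : ℂ) * triTau ^ 2‖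
        < (1 / 2) * ‖(a₁ : ℂ) + (a₂ : ℂ) * triTau + (a₃ : ℂ) * triTau ^ 2‖) :
    (n.factorial : ℝ) / ((a₁.factorial : ℝ) * a₂.factorial * a₃.factorial)
      ≤ (n.factorial : ℝ) / ((b₁.factorial : ℝ) * b₂.factorial * b₃.factorial) := by
  have hquad : 4 * triNormSq b₁ b₂ b₃ < triNormSq a₁ a₂ a₃ := by
    have hsq := pow_lt_pow_left₀ hlt (norm_nonneg _) two_ne_zero
    have hb' := norm_sq_displacement b₁ b₂ b₃
    have ha' := norm_sq_displacement a₁ a₂ a₃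
    push_cast at hb' ha'
    rw [mul_pow, hb', ha'] at hsq
    linarith
  have hfac : (b₁ ! * b₂ ! * b₃ ! : ℝ) ≤ a₁ ! * a₂ ! * a₃ ! := by
    exact_mod_cast factorial_mul_factorial_mul_factorial_le_of_four_mul_triNormSq_lt
      (by omega) hquad
  exact div_le_div_of_nonneg_left (by positivity) (by positivity) hfac

/-- **Monotonicity of trinomial point probabilities in the displacement** (Lemma 3.9):
if `a₁ + a₂ + a₃ = b₁ + b₂ + b₃ = n` and the displacement `b₁ + b₂τ + b₃τ²` is less than
half of the displacement `a₁ + a₂τ + a₃τ²` in modulus, then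
`n!/(b₁!b₂!b₃!) ≥ n!/(a₁!a₂!a₃!)`. -/
theorem trinomial_monotone_in_displacement
    (n : ℕ) (hn : 1 ≤ n) (a₁ a₂ a₃ b₁ b₂ b₃ : ℕ)
    (ha : a₁ + a₂ + a₃ = n) (hb : b₁ + b₂ + b₃ = n)
    (hlt : ‖(b₁ : ℂ) + (b₂ : ℂ) * triTau + (b₃ : ℂ) * triTau ^ 2‖
        < (1 / 2) * ‖(a₁ : ℂ) + (a₂ : ℂ) * triTau + (a₃ : ℂ) * triTau ^ 2‖) :
    (n.factorial : ℝ) / ((a₁.factorial : ℝ) * a₂.factorial * a₃.factorial)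
      ≤ (n.factorial : ℝ) / ((b₁.factorial : ℝ) * b₂.factorial * b₃.factorial) :=
  trinomial_monotone_in_displacement_general n a₁ a₂ a₃ b₁ b₂ b₃ ha hb hlt
end

section
/- A short Brownian bridge between interior points stays in the domain (Lemma 4.6 of the paper, first assertion): Let Ω ⊆ ℂ be an open set and let x, y ∈ Ω be such that the straight line segment from x to y is contained in Ω. Let W be a standard planar Brownian motion started at 0, and for t > 0 define the Brownian bridge from x to y of duration t by b_s = x + (y − x)·(s/t) + W_s − (s/t)·W_t for s ∈ [0, t]. Then P( for all s ∈ [0, t], b_s ∈ Ω ) → 1 as t → 0⁺. -/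
/-! Since the segment is compact, some thickening of it of width `ε` lies in `D`. On the event
that `‖W‖ < ε / 2` on `[0, t]`, the bridge at time `s` differs from the segment point
`x + (s / t) (y - x)` by `W s - (s / t) W t`, of norm `< ε`. By continuity of the paths at `0`
these events increase to a full-measure set as `t ↓ 0`, so their probabilities tend to `1`. -/

open MeasureTheory ProbabilityTheory Filter

/-- A standard planar Brownian motion started at `x`: `X₀ = x` a.s., a.s. continuous
sample paths on `[0, ∞)`, independent increments, and for `0 ≤ s ≤ t` the increment
`X_t - X_s` has independent centered real Gaussian real and imaginary parts of
variance `t - s`. -/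
structure IsPlanarBrownianMotion {Ω : Type} [MeasurableSpace Ω] (P : Measure Ω)
    (X : ℝ → Ω → ℂ) (x : ℂ) : Prop where
  start : ∀ᵐ ω ∂P, X 0 ω = x
  cont : ∀ᵐ ω ∂P, ContinuousOn (fun t => X t ω) (Set.Ici 0)
  indep_incr : ∀ (n : ℕ) (t : ℕ → ℝ), (∀ i, 0 ≤ t i) → Monotone t →
    iIndepFun
      (fun i : Fin n => fun ω => X (t (i + 1)) ω - X (t i) ω) P
  incr_re : ∀ s t : ℝ, 0 ≤ s → s ≤ t →
    P.map (fun ω => (X t ω - X s ω).re) = gaussianReal 0 (Real.toNNReal (t - s))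
  incr_im : ∀ s t : ℝ, 0 ≤ s → s ≤ t →
    P.map (fun ω => (X t ω - X s ω).im) = gaussianReal 0 (Real.toNNReal (t - s))
  incr_indep : ∀ s t : ℝ, 0 ≤ s → s ≤ t →
    IndepFun (fun ω => (X t ω - X s ω).re) (fun ω => (X t ω - X s ω).im) P

open Set Metric Topology

theorem add_smul_sub_add_sub_smul_mem_thickening_segment {E : Type*} [SeminormedAddCommGroup E]
    [NormedSpace ℝ E] {x y w w' : E} {r ε : ℝ} (hr : r ∈ Icc (0 : ℝ) 1)
    (hw : ‖w‖ < ε / 2) (hw' : ‖w'‖ < ε / 2) :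
    x + r • (y - x) + w - r • w' ∈ thickening ε (segment ℝ x y) := by
  have hp : x + r • (y - x) ∈ segment ℝ x y := by
    rw [segment_eq_image']
    exact ⟨r, hr, rfl⟩
  have hnorm : ‖w - r • w'‖ < ε :=
    calc ‖w - r • w'‖ ≤ ‖w‖ + ‖r • w'‖ := norm_sub_le _ _
      _ = ‖w‖ + r * ‖w'‖ := by rw [norm_smul_of_nonneg hr.1]
      _ ≤ ‖w‖ + ‖w'‖ := by gcongr; exact mul_le_of_le_one_left (norm_nonneg _) hr.2
      _ < ε := by linarith
  refine mem_thickening_iff.2 ⟨_, hp, ?_⟩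
  rw [dist_eq_norm]
  convert hnorm using 2
  abel

theorem tendsto_measure_nhdsGT_of_antitone {α : Type*} [MeasurableSpace α] {μ : Measure α}
    {A : ℝ → Set α} (hA : Antitone A) (a : ℝ) :
    Tendsto (fun t => μ (A t)) (𝓝[>] a) (𝓝 (μ (⋃ t ∈ Ioi a, A t))) := by
  rw [← tendsto_comp_coe_Ioi_atBot, biUnion_eq_iUnion]
  exact tendsto_measure_iUnion_atBot fun s t hst => hA hst

theorem tendsto_measure_nhdsGT_one_of_antitone {α : Type*} [MeasurableSpace α] {μ : Measure α}
    [IsProbabilityMeasure μ] {A : ℝ → Set α} (hA : Antitone A) {a : ℝ}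
    (h : ∀ᵐ ω ∂μ, ∃ t > a, ω ∈ A t) :
    Tendsto (fun t => μ (A t)) (𝓝[>] a) (𝓝 1) := by
  have hfull : μ (⋃ t ∈ Ioi a, A t) = 1 := by
    rw [← measure_univ (μ := μ)]
    refine measure_congr (ae_eq_univ.2 (ae_iff.1 ?_))
    filter_upwards [h] with ω ⟨t, ht, hω⟩
    exact mem_biUnion ht hω
  exact hfull ▸ tendsto_measure_nhdsGT_of_antitone (μ := μ) hA a

theorem ContinuousWithinAt.exists_forall_Icc_norm_lt {E : Type*} [SeminormedAddCommGroup E]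
    {f : ℝ → E} {a r : ℝ} (hf : ContinuousWithinAt f (Ici a) a) (ha : f a = 0) (hr : 0 < r) :
    ∃ t > a, ∀ s ∈ Icc a t, ‖f s‖ < r := by
  have hnorm : Tendsto (fun s => ‖f s‖) (𝓝[≥] a) (𝓝 0) := by
    simpa only [ha, norm_zero] using hf.tendsto.norm
  have hsmall : ∀ᶠ s in 𝓝[≥] a, ‖f s‖ < r := hnorm.eventually (gt_mem_nhds hr)
  exact mem_nhdsGE_iff_exists_Icc_subset.1 hsmall

theorem tendsto_measure_forall_Icc_norm_lt {Ω E : Type*} [MeasurableSpace Ω] {P : Measure Ω}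
    [IsProbabilityMeasure P] [SeminormedAddCommGroup E] {X : ℝ → Ω → E}
    (hstart : ∀ᵐ ω ∂P, X 0 ω = 0) (hcont : ∀ᵐ ω ∂P, ContinuousWithinAt (X · ω) (Ici 0) 0)
    {r : ℝ} (hr : 0 < r) :
    Tendsto (fun t => P {ω | ∀ s ∈ Icc 0 t, ‖X s ω‖ < r}) (𝓝[>] 0) (𝓝 1) := by
  refine tendsto_measure_nhdsGT_one_of_antitone (A := fun t => {ω | ∀ s ∈ Icc 0 t, ‖X s ω‖ < r})
    (fun t t' htt' ω hω s hs => hω s ⟨hs.1, hs.2.trans htt'⟩) ?_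
  filter_upwards [hstart, hcont] with ω h0 hc
  exact hc.exists_forall_Icc_norm_lt h0 hr

theorem brownian_bridge_stays_in_domain_general
    {Ω : Type} [MeasurableSpace Ω] (P : Measure Ω) [IsProbabilityMeasure P]
    (D : Set ℂ) (hD : IsOpen D) (x y : ℂ)
    (hseg : segment ℝ x y ⊆ D)
    (W : ℝ → Ω → ℂ) (hW : IsPlanarBrownianMotion P W 0) :
    Tendsto
      (fun t : ℝ => P {ω | ∀ s ∈ Set.Icc (0 : ℝ) t,
        x + ((s / t : ℝ) : ℂ) * (y - x) + W s ω - ((s / t : ℝ) : ℂ) * W t ω ∈ D})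
      (nhdsWithin 0 (Set.Ioi 0)) (nhds 1) := by
  have hcompact : IsCompact (segment ℝ x y) := by
    simpa only [convexHull_pair] using (toFinite {x, y}).isCompact_convexHull ℝ
  obtain ⟨ε, hε, hthick⟩ := hcompact.exists_thickening_subset_open hD hseg
  have hsmall := tendsto_measure_forall_Icc_norm_lt hW.start
    (hW.cont.mono fun ω hω => hω 0 self_mem_Ici) (half_pos hε)
  refine tendsto_of_tendsto_of_tendsto_of_le_of_le' hsmall tendsto_const_nhds ?_
    (Eventually.of_forall fun _ => prob_le_one)
  filter_upwards [self_mem_nhdsWithin] with t (ht : 0 < t)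
  refine measure_mono fun ω hω s hs => hthick ?_
  have hst : s / t ∈ Icc (0 : ℝ) 1 := ⟨div_nonneg hs.1 ht.le, (div_le_one ht).2 hs.2⟩
  simpa only [Complex.real_smul] using
    add_smul_sub_add_sub_smul_mem_thickening_segment hst (hω s hs) (hω t ⟨ht.le, le_rfl⟩)

/-- **A short Brownian bridge between interior points stays in the domain**
(Lemma 4.6, first assertion): if the segment from `x` to `y` lies in the open set `D`,
then the Brownian bridge `b_s = x + (y-x)(s/t) + W_s - (s/t)W_t` from `x` to `y` of
duration `t` stays in `D` on all of `[0, t]` with probability tending to `1` as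
`t → 0⁺`. -/
theorem brownian_bridge_stays_in_domain
    {Ω : Type} [MeasurableSpace Ω] (P : Measure Ω) [IsProbabilityMeasure P]
    (D : Set ℂ) (hD : IsOpen D) (x y : ℂ) (hx : x ∈ D) (hy : y ∈ D)
    (hseg : segment ℝ x y ⊆ D)
    (W : ℝ → Ω → ℂ) (hW : IsPlanarBrownianMotion P W 0) :
    Tendsto
      (fun t : ℝ => P {ω | ∀ s ∈ Set.Icc (0 : ℝ) t,
        x + ((s / t : ℝ) : ℂ) * (y - x) + W s ω - ((s / t : ℝ) : ℂ) * W t ω ∈ D})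
      (nhdsWithin 0 (Set.Ioi 0)) (nhds 1) :=
  brownian_bridge_stays_in_domain_general P D hD x y hseg W hW
end
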